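/- Let n ≥ 1, 1 < p < ∞, and let M be a family of Borel measures on ℝⁿ with mod_p M < ∞, and let ρ : ℝⁿ → [0,∞) be a p-weakly admissible Borel minimizer, i.e. mod_p M = ∫_{ℝⁿ} ρ^p dH^n. Then for every p-integrable p-weakly admissible Borel function φ : ℝⁿ → [0,∞) one has mod_p M ≤ ∫_{ℝⁿ} φ ρ^{p-1} dH^n. -/

import Mathlib

open MeasureTheory Filter ENNReal

/-- The `p`-modulus of a family `M` of measures, with respect to a reference measure `μ`. -/
noncomputable def modulus {X : Type*} [MeasurableSpace X] (p : ℝ) (μ : Measure X)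
    (M : Set (Measure X)) : ℝ≥0∞ :=
  ⨅ (ρ : X → ℝ) (_ : Measurable ρ) (_ : ∀ x, 0 ≤ ρ x)
    (_ : ∀ ν ∈ M, 1 ≤ ∫⁻ x, ENNReal.ofReal (ρ x) ∂ν),
    ∫⁻ x, ENNReal.ofReal (ρ x) ^ p ∂μ

/-- A nonnegative Borel function `ρ` is `p`-weakly admissible for `M` (w.r.t. `μ`) if there is a
subfamily `N ⊆ M` of `p`-modulus zero such that `∫ ρ dν ≥ 1` for all `ν ∈ M \ N`. -/
def WeaklyAdmissible {X : Type*} [MeasurableSpace X] (p : ℝ) (μ : Measure X)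
    (M : Set (Measure X)) (ρ : X → ℝ) : Prop :=
  ∃ N ⊆ M, modulus p μ N = 0 ∧ ∀ ν ∈ M \ N, 1 ≤ ∫⁻ x, ENNReal.ofReal (ρ x) ∂ν

/-- The standard (normalized) `d`-dimensional Hausdorff measure: Mathlib's (unnormalized)
Hausdorff measure multiplied by the isodiametric normalization constant `ω_d / 2^d`, where
`ω_d` is the volume of the Euclidean unit `d`-ball. With this normalization the
`n`-dimensional Hausdorff measure on `ℝⁿ` equals Lebesgue measure. -/
noncomputable def stdHausdorff (d : ℕ) (X : Type*) [EMetricSpace X] [MeasurableSpace X]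
    [BorelSpace X] : Measure X :=
  (volume (Metric.ball (0 : EuclideanSpace ℝ (Fin d)) 1) / 2 ^ d) • μH[(d : ℝ)]

/-!
Perturb the minimizer towards `φ`: for `0 < t ≤ 1` the convex combination `ρₜ = (1 - t) ρ + t φ`
is again weakly admissible, hence `mod_p M ≤ ∫ ρₜ^p`. Writing `ρₜ^p = ρₜ · ρₜ^{p-1}` and bounding
`ρ ρₜ^{p-1}` by Young's inequality gives `(1 + t(p - 1)) ∫ ρₜ^p ≤ (1 - t) ∫ ρ^p + p t ∫ φ ρₜ^{p-1}`;
as `∫ ρ^p = mod_p M < ∞`, this yields `mod_p M ≤ ∫ φ ρₜ^{p-1}`. Letting `t → 0` by dominated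
convergence (with the Hölder-integrable bound `φ (ρ + φ)^{p-1}`) proves the claim.
-/

open Topology Set

namespace Real

theorem mul_mul_rpow_sub_one_le {a c p : ℝ} (ha : 0 ≤ a) (hc : 0 ≤ c) (hp : 1 < p) :
    p * (a * c ^ (p - 1)) ≤ a ^ p + (p - 1) * c ^ p := by
  have hpq : p.HolderConjugate p.conjExponent := .conjExponent hp
  have hyoung := young_inequality_of_nonneg ha (rpow_nonneg hc (p - 1)) hpq
  rw [← rpow_mul hc, hpq.sub_one_mul_conj] at hyoung
  calc p * (a * c ^ (p - 1))
      ≤ p * (a ^ p / p + c ^ p / p.conjExponent) := by gcongr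
    _ = a ^ p + (p - 1) * c ^ p := by
      rw [conjExponent]
      field_simp [(by linarith : p - 1 ≠ 0)]

theorem convexComb_rpow_le {a b t p : ℝ} (ha : 0 ≤ a) (hb : 0 ≤ b) (ht0 : 0 ≤ t) (ht1 : t ≤ 1)
    (hp : 1 < p) :
    ((1 - t) + p * t) * ((1 - t) * a + t * b) ^ p ≤
      (1 - t) * a ^ p + p * t * (b * ((1 - t) * a + t * b) ^ (p - 1)) := by
  set c := (1 - t) * a + t * b
  have hc : 0 ≤ c := by positivity
  have hsplit : c ^ p = (1 - t) * (a * c ^ (p - 1)) + t * (b * c ^ (p - 1)) := by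
    rw [← sub_add_cancel p 1, rpow_add' hc (by linarith), rpow_one, add_sub_cancel_right]
    ring
  have hyoung := mul_le_mul_of_nonneg_left (mul_mul_rpow_sub_one_le ha hc hp) (sub_nonneg.2 ht1)
  linear_combination p * hsplit + hyoung

end Real

theorem ENNReal.ofReal_convexComb_rpow_le {a b t p : ℝ} (ha : 0 ≤ a) (hb : 0 ≤ b) (ht0 : 0 ≤ t)
    (ht1 : t ≤ 1) (hp : 1 < p) :
    ENNReal.ofReal (1 - t) * ENNReal.ofReal ((1 - t) * a + t * b) ^ p +
        ENNReal.ofReal (p * t) * ENNReal.ofReal ((1 - t) * a + t * b) ^ p ≤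
      ENNReal.ofReal (1 - t) * ENNReal.ofReal a ^ p +
        ENNReal.ofReal (p * t) *
          (ENNReal.ofReal b * ENNReal.ofReal ((1 - t) * a + t * b) ^ (p - 1)) := by
  have ht : 0 ≤ 1 - t := sub_nonneg.2 ht1
  have hc : 0 ≤ (1 - t) * a + t * b := by positivity
  have hpt : 0 ≤ p * t := mul_nonneg (by linarith) ht0
  rw [← add_mul, ← ofReal_add ht hpt, ofReal_rpow_of_nonneg hc (by linarith),
    ofReal_rpow_of_nonneg ha (by linarith), ofReal_rpow_of_nonneg hc (by linarith),
    ← ofReal_mul hb, ← ofReal_mul ht, ← ofReal_mul hpt, ← ofReal_mul (by positivity),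
    ← ofReal_add (by positivity) (by positivity)]
  exact ofReal_le_ofReal (Real.convexComb_rpow_le ha hb ht0 ht1 hp)

section

variable {X : Type*} [MeasurableSpace X] {p : ℝ} {μ : Measure X} {M N₁ N₂ : Set (Measure X)}
  {f g : X → ℝ}

theorem modulus_le_lintegral (hf : Measurable f) (hf0 : ∀ x, 0 ≤ f x)
    (hadm : ∀ ν ∈ M, 1 ≤ ∫⁻ x, ENNReal.ofReal (f x) ∂ν) :
    modulus p μ M ≤ ∫⁻ x, ENNReal.ofReal (f x) ^ p ∂μ :=
  iInf_le_of_le f <| iInf_le_of_le hf <| iInf_le_of_le hf0 <| iInf_le _ hadm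

theorem exists_admissible_lintegral_lt_of_modulus_lt {ε : ℝ≥0∞} (h : modulus p μ M < ε) :
    ∃ g : X → ℝ, Measurable g ∧ (∀ x, 0 ≤ g x) ∧
      (∀ ν ∈ M, 1 ≤ ∫⁻ x, ENNReal.ofReal (g x) ∂ν) ∧ ∫⁻ x, ENNReal.ofReal (g x) ^ p ∂μ < ε := by
  simpa only [modulus, iInf_lt_iff, exists_prop] using h

/-- Adding an admissible function for the exceptional family of modulus zero costs an arbitrarily
small amount in `Lᵖ`, by Minkowski's inequality. -/
theorem WeaklyAdmissible.modulus_le_lintegral (hp : 1 ≤ p) (hf : Measurable f)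
    (hf0 : ∀ x, 0 ≤ f x) (hw : WeaklyAdmissible p μ M f) :
    modulus p μ M ≤ ∫⁻ x, ENNReal.ofReal (f x) ^ p ∂μ := by
  obtain ⟨N, -, hN, hadm⟩ := hw
  have hp0 : 0 < p := by linarith
  rw [← rpow_le_rpow_iff (inv_pos.2 hp0)]
  refine ENNReal.le_of_forall_pos_le_add fun ε hε _ => ?_
  obtain ⟨g, hg, hg0, hgadm, hglt⟩ := exists_admissible_lintegral_lt_of_modulus_lt (p := p)
    (μ := μ) (hN ▸ ENNReal.rpow_pos (coe_pos.2 hε) coe_ne_top : modulus p μ N < (ε : ℝ≥0∞) ^ p)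
  have hfg : ∀ ν ∈ M, 1 ≤ ∫⁻ x, ENNReal.ofReal (f x + g x) ∂ν := by
    intro ν hν
    by_cases hνN : ν ∈ N
    · exact (hgadm ν hνN).trans
        (lintegral_mono fun x => ofReal_le_ofReal (le_add_of_nonneg_left (hf0 x)))
    · exact (hadm ν ⟨hν, hνN⟩).trans
        (lintegral_mono fun x => ofReal_le_ofReal (le_add_of_nonneg_right (hg0 x)))
  calc modulus p μ M ^ p⁻¹
      ≤ (∫⁻ x, ENNReal.ofReal (f x + g x) ^ p ∂μ) ^ p⁻¹ :=
        rpow_le_rpow (_root_.modulus_le_lintegral (hf.add hg)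
          (fun x => add_nonneg (hf0 x) (hg0 x)) hfg) (by positivity)
    _ ≤ (∫⁻ x, ENNReal.ofReal (f x) ^ p ∂μ) ^ p⁻¹ +
          (∫⁻ x, ENNReal.ofReal (g x) ^ p ∂μ) ^ p⁻¹ := by
      simpa only [← one_div, Pi.add_apply, ← ofReal_add (hf0 _) (hg0 _)] using
        lintegral_Lp_add_le hf.ennreal_ofReal.aemeasurable hg.ennreal_ofReal.aemeasurable hp
    _ ≤ (∫⁻ x, ENNReal.ofReal (f x) ^ p ∂μ) ^ p⁻¹ + ε := by
      gcongr
      exact (rpow_inv_le_iff hp0).2 hglt.le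

theorem modulus_union_eq_zero (hp : 1 ≤ p) (h₁ : modulus p μ N₁ = 0) (h₂ : modulus p μ N₂ = 0) :
    modulus p μ (N₁ ∪ N₂) = 0 := by
  refine le_antisymm (ENNReal.le_of_forall_pos_le_add fun ε hε _ => ?_) zero_le
  obtain ⟨g, hg, hg0, hgadm, hglt⟩ :=
    exists_admissible_lintegral_lt_of_modulus_lt (h₂ ▸ coe_pos.2 hε : modulus p μ N₂ < ε)
  have hw : WeaklyAdmissible p μ (N₁ ∪ N₂) g :=
    ⟨N₁, subset_union_left, h₁, fun ν hν => hgadm ν (hν.1.resolve_left hν.2)⟩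
  exact (zero_add (ε : ℝ≥0∞)).symm ▸ (hw.modulus_le_lintegral hp hg hg0).trans hglt.le

theorem WeaklyAdmissible.convexComb (hp : 1 ≤ p) (hf0 : ∀ x, 0 ≤ f x) (hg0 : ∀ x, 0 ≤ g x)
    (hf : WeaklyAdmissible p μ M f) (hg : WeaklyAdmissible p μ M g) {a b : ℝ} (ha : 0 ≤ a)
    (hb : 0 ≤ b) (hab : a + b = 1) :
    WeaklyAdmissible p μ M (fun x => a * f x + b * g x) := by
  obtain ⟨N₁, hN₁M, hN₁, hf⟩ := hf
  obtain ⟨N₂, hN₂M, hN₂, hg⟩ := hg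
  refine ⟨N₁ ∪ N₂, union_subset hN₁M hN₂M, modulus_union_eq_zero hp hN₁ hN₂, fun ν hν => ?_⟩
  calc (1 : ℝ≥0∞)
      = ENNReal.ofReal a * 1 + ENNReal.ofReal b * 1 := by
        rw [mul_one, mul_one, ← ofReal_add ha hb, hab, ofReal_one]
    _ ≤ ENNReal.ofReal a * ∫⁻ x, ENNReal.ofReal (f x) ∂ν +
          ENNReal.ofReal b * ∫⁻ x, ENNReal.ofReal (g x) ∂ν := by
        gcongr
        exacts [hf ν ⟨hν.1, fun h => hν.2 (.inl h)⟩, hg ν ⟨hν.1, fun h => hν.2 (.inr h)⟩]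
    _ ≤ ∫⁻ x, ENNReal.ofReal a * ENNReal.ofReal (f x) +
          ENNReal.ofReal b * ENNReal.ofReal (g x) ∂ν := by
        rw [← lintegral_const_mul' _ _ ofReal_ne_top, ← lintegral_const_mul' _ _ ofReal_ne_top]
        exact le_lintegral_add _ _
    _ = ∫⁻ x, ENNReal.ofReal (a * f x + b * g x) ∂ν := lintegral_congr fun x => by
        rw [ofReal_add (mul_nonneg ha (hf0 x)) (mul_nonneg hb (hg0 x)), ofReal_mul ha,
          ofReal_mul hb]

theorem modulus_le_lintegral_mul_convexComb_rpow {ρ φ : X → ℝ} (hp : 1 < p)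
    (hfin : modulus p μ M ≠ ⊤) (hρ : Measurable ρ) (hρ0 : ∀ x, 0 ≤ ρ x)
    (hρw : WeaklyAdmissible p μ M ρ)
    (hρmin : modulus p μ M = ∫⁻ x, ENNReal.ofReal (ρ x) ^ p ∂μ) (hφ : Measurable φ)
    (hφ0 : ∀ x, 0 ≤ φ x) (hφw : WeaklyAdmissible p μ M φ) {t : ℝ} (ht0 : 0 < t) (ht1 : t ≤ 1) :
    modulus p μ M ≤
      ∫⁻ x, ENNReal.ofReal (φ x) * ENNReal.ofReal ((1 - t) * ρ x + t * φ x) ^ (p - 1) ∂μ := by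
  set c : X → ℝ := fun x => (1 - t) * ρ x + t * φ x
  set B := ∫⁻ x, ENNReal.ofReal (φ x) * ENNReal.ofReal (c x) ^ (p - 1) ∂μ
  have hcw : WeaklyAdmissible p μ M c :=
    hρw.convexComb hp.le hρ0 hφ0 hφw (sub_nonneg.2 ht1) ht0.le (sub_add_cancel 1 t)
  have hc : modulus p μ M ≤ ∫⁻ x, ENNReal.ofReal (c x) ^ p ∂μ :=
    hcw.modulus_le_lintegral hp.le (by fun_prop) fun x =>
      add_nonneg (mul_nonneg (sub_nonneg.2 ht1) (hρ0 x)) (mul_nonneg ht0.le (hφ0 x))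
  have hint : ENNReal.ofReal (1 - t) * ∫⁻ x, ENNReal.ofReal (c x) ^ p ∂μ +
        ENNReal.ofReal (p * t) * ∫⁻ x, ENNReal.ofReal (c x) ^ p ∂μ ≤
      ENNReal.ofReal (1 - t) * modulus p μ M + ENNReal.ofReal (p * t) * B := by
    rw [hρmin, ← lintegral_const_mul' _ _ ofReal_ne_top, ← lintegral_const_mul' _ _ ofReal_ne_top,
      ← lintegral_const_mul' _ _ ofReal_ne_top, ← lintegral_const_mul' _ _ ofReal_ne_top,
      ← lintegral_add_left (by fun_prop), ← lintegral_add_left (by fun_prop)]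
    exact lintegral_mono fun x =>
      ofReal_convexComb_rpow_le (hρ0 x) (hφ0 x) ht0.le ht1 hp
  have hmul : ENNReal.ofReal (p * t) * modulus p μ M ≤ ENNReal.ofReal (p * t) * B :=
    (ENNReal.add_le_add_iff_left (mul_ne_top ofReal_ne_top hfin)).1 <|
      (add_le_add (mul_le_mul_right hc _) (mul_le_mul_right hc _)).trans hint
  exact (ENNReal.mul_le_mul_iff_right (ofReal_pos.2 (by nlinarith)).ne' ofReal_ne_top).1 hmul

theorem MeasureTheory.MemLp.lintegral_ofReal_rpow_ne_top (hp : 0 < p) (hf0 : ∀ x, 0 ≤ f x)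
    (hf : MemLp f (ENNReal.ofReal p) μ) : ∫⁻ x, ENNReal.ofReal (f x) ^ p ∂μ ≠ ⊤ := by
  have h := lintegral_rpow_enorm_lt_top_of_eLpNorm_lt_top (ofReal_pos.2 hp).ne' ofReal_ne_top hf.2
  simp only [toReal_ofReal hp.le, Real.enorm_eq_ofReal (hf0 _)] at h
  exact h.ne

theorem tendsto_lintegral_mul_convexComb_rpow {ρ φ : X → ℝ} (hp : 1 < p) (hρ : Measurable ρ)
    (hρ0 : ∀ x, 0 ≤ ρ x) (hφ : Measurable φ) (hφ0 : ∀ x, 0 ≤ φ x)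
    (hρp : ∫⁻ x, ENNReal.ofReal (ρ x) ^ p ∂μ ≠ ⊤) (hφp : ∫⁻ x, ENNReal.ofReal (φ x) ^ p ∂μ ≠ ⊤) :
    Tendsto (fun t => ∫⁻ x, ENNReal.ofReal (φ x) *
        ENNReal.ofReal ((1 - t) * ρ x + t * φ x) ^ (p - 1) ∂μ) (𝓝[>] 0)
      (𝓝 (∫⁻ x, ENNReal.ofReal (φ x) * ENNReal.ofReal (ρ x) ^ (p - 1) ∂μ)) := by
  have hsum : ∫⁻ x, (ENNReal.ofReal (ρ x) + ENNReal.ofReal (φ x)) ^ p ∂μ < ⊤ :=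
    lintegral_rpow_add_lt_top_of_lintegral_rpow_lt_top (by fun_prop) hρp.lt_top hφp.lt_top hp.le
  have hpq : p.HolderConjugate p.conjExponent := .conjExponent hp
  have hbound : ∫⁻ x, ENNReal.ofReal (φ x) *
      (ENNReal.ofReal (ρ x) + ENNReal.ofReal (φ x)) ^ (p - 1) ∂μ ≠ ⊤ :=
    ((lintegral_mul_rpow_le_lintegral_rpow_mul_lintegral_rpow hpq (by fun_prop)
      (by fun_prop)).trans_lt (mul_lt_top (rpow_lt_top_of_nonneg (by positivity) hφp)
        (rpow_lt_top_of_nonneg (one_div_pos.2 hpq.symm.pos).le hsum.ne))).ne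
  refine tendsto_lintegral_filter_of_dominated_convergence _
    (Eventually.of_forall fun t => by fun_prop) ?_ hbound (Eventually.of_forall fun x => ?_)
  · filter_upwards [Ioo_mem_nhdsGT one_pos] with t ht
    refine Eventually.of_forall fun x => ?_
    gcongr
    rw [← ofReal_add (hρ0 x) (hφ0 x)]
    exact ofReal_le_ofReal (by nlinarith [hρ0 x, hφ0 x, ht.1, ht.2])
  · have hcont : Continuous fun t : ℝ =>
        ENNReal.ofReal (φ x) * ENNReal.ofReal ((1 - t) * ρ x + t * φ x) ^ (p - 1) :=
      (ENNReal.continuous_const_mul ofReal_ne_top).comp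
        (ENNReal.continuous_rpow_const.comp (ENNReal.continuous_ofReal.comp (by fun_prop)))
    simpa using (hcont.tendsto 0).mono_left nhdsWithin_le_nhds

end

theorem modulus_le_lintegral_mul_minimizer_pow_general (n : ℕ) (p : ℝ) (hp : 1 < p)
    (M : Set (Measure (EuclideanSpace ℝ (Fin n))))
    (hfin : modulus p (stdHausdorff n (EuclideanSpace ℝ (Fin n))) M < ⊤)
    (ρ : EuclideanSpace ℝ (Fin n) → ℝ) (hρmeas : Measurable ρ) (hρpos : ∀ x, 0 ≤ ρ x)
    (hρweak : WeaklyAdmissible p (stdHausdorff n (EuclideanSpace ℝ (Fin n))) M ρ)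
    (hρmin : modulus p (stdHausdorff n (EuclideanSpace ℝ (Fin n))) M = ∫⁻ x, ENNReal.ofReal (ρ x) ^ p ∂(stdHausdorff n (EuclideanSpace ℝ (Fin n))))
    (φ : EuclideanSpace ℝ (Fin n) → ℝ) (hφmeas : Measurable φ) (hφpos : ∀ x, 0 ≤ φ x)
    (hφLp : MemLp φ (ENNReal.ofReal p) (stdHausdorff n (EuclideanSpace ℝ (Fin n))))
    (hφweak : WeaklyAdmissible p (stdHausdorff n (EuclideanSpace ℝ (Fin n))) M φ) :
    modulus p (stdHausdorff n (EuclideanSpace ℝ (Fin n))) M ≤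
      ∫⁻ x, ENNReal.ofReal (φ x) * ENNReal.ofReal (ρ x) ^ (p - 1) ∂(stdHausdorff n (EuclideanSpace ℝ (Fin n))) := by
  have hρp := hρmin ▸ hfin.ne
  have hφp := hφLp.lintegral_ofReal_rpow_ne_top (by linarith) hφpos
  refine ge_of_tendsto
    (tendsto_lintegral_mul_convexComb_rpow hp hρmeas hρpos hφmeas hφpos hρp hφp) ?_
  filter_upwards [Ioc_mem_nhdsGT one_pos] with t ht
  exact modulus_le_lintegral_mul_convexComb_rpow hp hfin.ne hρmeas hρpos hρweak hρmin hφmeas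
    hφpos hφweak ht.1 ht.2

/-- If `ρ` is a `p`-weakly admissible minimizer for `mod_p M < ∞`, then for every `p`-integrable
`p`-weakly admissible `φ` one has `mod_p M ≤ ∫ φ ρ^{p-1} dHⁿ`. -/
theorem modulus_le_lintegral_mul_minimizer_pow (n : ℕ) (hn : 1 ≤ n) (p : ℝ) (hp : 1 < p)
    (M : Set (Measure (EuclideanSpace ℝ (Fin n))))
    (hfin : modulus p (stdHausdorff n (EuclideanSpace ℝ (Fin n))) M < ⊤)
    (ρ : EuclideanSpace ℝ (Fin n) → ℝ) (hρmeas : Measurable ρ) (hρpos : ∀ x, 0 ≤ ρ x)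
    (hρweak : WeaklyAdmissible p (stdHausdorff n (EuclideanSpace ℝ (Fin n))) M ρ)
    (hρmin : modulus p (stdHausdorff n (EuclideanSpace ℝ (Fin n))) M = ∫⁻ x, ENNReal.ofReal (ρ x) ^ p ∂(stdHausdorff n (EuclideanSpace ℝ (Fin n))))
    (φ : EuclideanSpace ℝ (Fin n) → ℝ) (hφmeas : Measurable φ) (hφpos : ∀ x, 0 ≤ φ x)
    (hφLp : MemLp φ (ENNReal.ofReal p) (stdHausdorff n (EuclideanSpace ℝ (Fin n))))
    (hφweak : WeaklyAdmissible p (stdHausdorff n (EuclideanSpace ℝ (Fin n))) M φ) :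
    modulus p (stdHausdorff n (EuclideanSpace ℝ (Fin n))) M ≤
      ∫⁻ x, ENNReal.ofReal (φ x) * ENNReal.ofReal (ρ x) ^ (p - 1) ∂(stdHausdorff n (EuclideanSpace ℝ (Fin n))) :=
  modulus_le_lintegral_mul_minimizer_pow_general n p hp M hfin ρ hρmeas hρpos hρweak hρmin φ hφmeas
    hφpos hφLp hφweak
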